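/- arXiv:1105.6155 — 3 statements merged into one kernel-verified Lean document; each statement's English description precedes it below -/
import Mathlib

section
/- Let λ ≥ 2 be an integer, let 0.9 < a < b < ∞, let 0 < h₀ < a/2, and let f : ℝ → ℝ be any function. Put β₀ = ∑_{j=1}^{λ} binom(λ, j)·((λ−1)h₀)^{j}·b^{λ−j}. If β₀ < min(1 − {a^λ}, 1 − {b^λ}), then (1/h₀^{λ−1}) ∫₀^{h₀} ⋯ ∫₀^{h₀} ( ∑_{n : a+h < n^{1/λ} ≤ b+h} d_λ(n) f(n) ) dh₁⋯dh_{λ−1} = ∑_{n : a < n^{1/λ} ≤ b} d_λ(n) f(n), where h = h₁ + ⋯ + h_{λ−1} and the integration is over (h₁, …, h_{λ−1}) ∈ [0, h₀]^{λ−1}. -/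
open MeasureTheory
open scoped Real

/-- `dfold λ n` is the number of ordered `λ`-tuples of positive integers whose product is `n`. -/
noncomputable def dfold (lam n : ℕ) : ℕ :=
  ((Fintype.piFinset fun _ : Fin lam => Finset.Icc 1 n).filter fun f => ∏ i, f i = n).card

/-!
The averaged sum does not depend on `h`: for `0 ≤ h ≤ (λ - 1) h₀` and `x ∈ {a, b}`, the binomial
theorem gives `(x + h)^λ - x^λ ≤ β₀ < 1 - {x^λ}`, so `(x + h)^λ` stays in the same unit interval
`[⌊x^λ⌋, ⌊x^λ⌋ + 1)` as `x^λ`. Both floors in the range of summation are therefore constant on the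
box `[0, h₀]^{λ-1}`, and averaging a constant returns it.
-/

theorem Nat.floor_eq_floor_of_le_of_sub_lt_one_sub_fract {y z : ℝ} (hy : 0 ≤ y) (hyz : y ≤ z)
    (h : z - y < 1 - Int.fract y) : ⌊z⌋₊ = ⌊y⌋₊ := by
  have hfloor : (⌊y⌋₊ : ℝ) = ⌊y⌋ := by exact_mod_cast Int.natCast_floor_eq_floor hy
  rw [Nat.floor_eq_iff (hy.trans hyz), hfloor]
  rw [Int.fract] at h
  exact ⟨(Int.floor_le y).trans hyz, by linarith⟩

theorem add_pow_sub_pow_eq_sum_Icc (x t : ℝ) (n : ℕ) :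
    (x + t) ^ n - x ^ n = ∑ j ∈ Finset.Icc 1 n, (n.choose j : ℝ) * t ^ j * x ^ (n - j) := by
  have hrange : Finset.range (n + 1) = insert 0 (Finset.Icc 1 n) := by
    ext k; simp only [Finset.mem_range, Finset.mem_insert, Finset.mem_Icc]; omega
  rw [add_comm x t, add_pow, hrange, Finset.sum_insert (by simp)]
  simp only [pow_zero, one_mul, Nat.sub_zero, Nat.choose_zero_right, Nat.cast_one, mul_one]
  rw [add_sub_cancel_left]
  exact Finset.sum_congr rfl fun j _ => by ring

theorem add_pow_sub_pow_le_sum_choose {x b t δ : ℝ} (n : ℕ) (hx : 0 ≤ x) (hxb : x ≤ b)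
    (ht : 0 ≤ t) (htδ : t ≤ δ) :
    (x + t) ^ n - x ^ n ≤ ∑ j ∈ Finset.Icc 1 n, (n.choose j : ℝ) * δ ^ j * b ^ (n - j) := by
  rw [add_pow_sub_pow_eq_sum_Icc]
  gcongr
  exact mul_nonneg (Nat.cast_nonneg _) (pow_nonneg (ht.trans htδ) _)

theorem floor_add_pow_eq_floor_pow {x b t δ : ℝ} (n : ℕ) (hx : 0 ≤ x) (hxb : x ≤ b)
    (ht : 0 ≤ t) (htδ : t ≤ δ)
    (hδ : ∑ j ∈ Finset.Icc 1 n, (n.choose j : ℝ) * δ ^ j * b ^ (n - j) < 1 - Int.fract (x ^ n)) :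
    ⌊(x + t) ^ n⌋₊ = ⌊x ^ n⌋₊ :=
  Nat.floor_eq_floor_of_le_of_sub_lt_one_sub_fract (pow_nonneg hx n)
    (pow_le_pow_left₀ hx (le_add_of_nonneg_right ht) n)
    ((add_pow_sub_pow_le_sum_choose n hx hxb ht htδ).trans_lt hδ)

theorem sum_mem_Icc_of_mem_Icc_pi {ι : Type*} [Fintype ι] {c : ℝ} {h : ι → ℝ}
    (hh : h ∈ Set.Icc 0 fun _ => c) : 0 ≤ ∑ i, h i ∧ ∑ i, h i ≤ Fintype.card ι * c := by
  refine ⟨Finset.sum_nonneg fun i _ => hh.1 i, ?_⟩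
  have := Finset.sum_le_card_nsmul Finset.univ h c fun i _ => hh.2 i
  rwa [Finset.card_univ, nsmul_eq_mul] at this

theorem setIntegral_const_Icc_pi {ι : Type*} [Fintype ι] {c : ℝ} (hc : 0 ≤ c) (y : ℝ) :
    ∫ _ in Set.Icc (0 : ι → ℝ) (fun _ => c), y = c ^ Fintype.card ι * y := by
  rw [setIntegral_const, measureReal_def, Real.volume_Icc_pi_toReal (show (0 : ι → ℝ) ≤ fun _ => c from fun _ => hc)]
  simp

theorem stmt2_general (lam : ℕ) (hlam : 2 ≤ lam) (a b h₀ : ℝ) (f : ℝ → ℝ)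
    (ha : 0.9 < a) (hab : a < b) (hh₀ : 0 < h₀)
    (hβ : ∑ j ∈ Finset.Icc 1 lam,
        (lam.choose j : ℝ) * (((lam : ℝ) - 1) * h₀) ^ j * b ^ (lam - j)
      < min (1 - Int.fract (a ^ lam)) (1 - Int.fract (b ^ lam))) :
    (1 / h₀ ^ (lam - 1)) *
        ∫ h in Set.Icc (0 : Fin (lam - 1) → ℝ) (fun _ => h₀),
          ∑ n ∈ Finset.Ioc ⌊(a + ∑ i, h i) ^ lam⌋₊ ⌊(b + ∑ i, h i) ^ lam⌋₊,
            (dfold lam n : ℝ) * f n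
      = ∑ n ∈ Finset.Ioc ⌊a ^ lam⌋₊ ⌊b ^ lam⌋₊, (dfold lam n : ℝ) * f n := by
  have ha0 : 0 ≤ a := by linarith [show (0 : ℝ) ≤ 0.9 by norm_num]
  have hconst : Set.EqOn
      (fun h : Fin (lam - 1) → ℝ =>
        ∑ n ∈ Finset.Ioc ⌊(a + ∑ i, h i) ^ lam⌋₊ ⌊(b + ∑ i, h i) ^ lam⌋₊, (dfold lam n : ℝ) * f n)
      (fun _ => ∑ n ∈ Finset.Ioc ⌊a ^ lam⌋₊ ⌊b ^ lam⌋₊, (dfold lam n : ℝ) * f n)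
      (Set.Icc 0 fun _ => h₀) := by
    intro h hh
    obtain ⟨ht0, ht⟩ := sum_mem_Icc_of_mem_Icc_pi hh
    rw [Fintype.card_fin, Nat.cast_sub (by omega : 1 ≤ lam), Nat.cast_one] at ht
    simp only
    rw [floor_add_pow_eq_floor_pow lam ha0 hab.le ht0 ht (hβ.trans_le (min_le_left _ _)),
      floor_add_pow_eq_floor_pow lam (ha0.trans hab.le) le_rfl ht0 ht
        (hβ.trans_le (min_le_right _ _))]
  rw [setIntegral_congr_fun measurableSet_Icc hconst, setIntegral_const_Icc_pi hh₀.le,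
    Fintype.card_fin]
  field_simp

/-- Lemma 2.1: if `h₀` is small enough (in terms of the fractional parts of `a^λ` and `b^λ`),
then the averaged sum `S_λ` equals the plain sum `∑_{a < n^{1/λ} ≤ b} d_λ(n) f(n)`.
The condition `a + h < n^{1/λ} ≤ b + h` is expressed as `(a+h)^λ < n ≤ (b+h)^λ`. -/
theorem stmt2 (lam : ℕ) (hlam : 2 ≤ lam) (a b h₀ : ℝ) (f : ℝ → ℝ)
    (ha : 0.9 < a) (hab : a < b) (hh₀ : 0 < h₀) (hh₀' : h₀ < a / 2)
    (hβ : ∑ j ∈ Finset.Icc 1 lam,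
        (lam.choose j : ℝ) * (((lam : ℝ) - 1) * h₀) ^ j * b ^ (lam - j)
      < min (1 - Int.fract (a ^ lam)) (1 - Int.fract (b ^ lam))) :
    (1 / h₀ ^ (lam - 1)) *
        ∫ h in Set.Icc (0 : Fin (lam - 1) → ℝ) (fun _ => h₀),
          ∑ n ∈ Finset.Ioc ⌊(a + ∑ i, h i) ^ lam⌋₊ ⌊(b + ∑ i, h i) ^ lam⌋₊,
            (dfold lam n : ℝ) * f n
      = ∑ n ∈ Finset.Ioc ⌊a ^ lam⌋₊ ⌊b ^ lam⌋₊, (dfold lam n : ℝ) * f n :=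
  stmt2_general lam hlam a b h₀ f ha hab hh₀ hβ
end

section
/- There exists a constant C > 0 such that for every integer n ≥ 3, d(n) ≤ exp(C·log n / log log n). -/
/-!
Since `d(n) = ∏ (aₚ + 1)` over `n = ∏ p ^ aₚ`, comparing each factor with `p ^ (aₚ / t)` gives
`d(n) ≤ (2t) ^ (2 ^ t) · n ^ (1 / t)` for every `t ≥ 1`: the ratio is at most `1` once
`p ≥ 2 ^ t`, and at most `2t` for each of the at most `2 ^ t` smaller primes.
Taking `t = (log log n) / 2`, so that `2 ^ t ≤ √(log n)`, makes both factors
`exp (O (log n / log log n))`.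
-/

/-- `d n` is the number of positive divisors of `n`. -/
noncomputable def dd (n : ℕ) : ℕ := n.divisors.card

open Real Finset

lemma succ_le_two_mul_mul_rpow {t p : ℝ} (ht : 1 ≤ t) (hp : 2 ≤ p) (a : ℕ) :
    (a + 1 : ℝ) ≤ 2 * t * p ^ (a / t) := by
  have hlog2 : 1 / 2 ≤ log 2 := by linarith [log_two_gt_d9]
  have h2p : (2 : ℝ) ^ (a / t) ≤ p ^ (a / t) := by gcongr
  have hexp : 1 + log 2 * (a / t) ≤ (2 : ℝ) ^ (a / t) := by
    rw [rpow_def_of_pos two_pos]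
    linarith [add_one_le_exp (log 2 * (a / t))]
  calc (a + 1 : ℝ) ≤ 2 * t * (1 + log 2 * (a / t)) := by
        have : (a : ℝ) / 2 ≤ log 2 * a := by nlinarith [(Nat.cast_nonneg a : (0 : ℝ) ≤ a)]
        field_simp
        nlinarith
    _ ≤ 2 * t * p ^ (a / t) := by gcongr; exact hexp.trans h2p

lemma succ_le_rpow_of_two_rpow_le {t p : ℝ} (ht : 0 < t) (hp : 2 ^ t ≤ p) (a : ℕ) :
    (a + 1 : ℝ) ≤ p ^ (a / t) :=
  calc (a + 1 : ℝ) ≤ 2 ^ a := by exact_mod_cast Nat.lt_two_pow_self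
    _ = ((2 : ℝ) ^ t) ^ (a / t) := by
        rw [← rpow_mul two_pos.le, mul_div_cancel₀ _ ht.ne', rpow_natCast]
    _ ≤ p ^ (a / t) := by gcongr

lemma Nat.cast_rpow_eq_prod_primeFactors {n : ℕ} (hn : n ≠ 0) (s : ℝ) :
    (n : ℝ) ^ s = ∏ p ∈ n.primeFactors, (p : ℝ) ^ (n.factorization p * s) := by
  conv_lhs => rw [Nat.prod_primeFactors_pow_factorization hn]
  push_cast
  rw [← finsetProd_rpow _ _ fun p _ => by positivity]
  refine prod_congr rfl fun p _ => ?_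
  rw [← rpow_natCast, ← rpow_mul (Nat.cast_nonneg p)]

lemma card_filter_lt_le {s : Finset ℕ} (hs : 0 ∉ s) {x : ℝ} (hx : 0 ≤ x) :
    (#(s.filter fun p : ℕ => (p : ℝ) < x) : ℝ) ≤ x := by
  have hsub : s.filter (fun p : ℕ => (p : ℝ) < x) ⊆ Ioc 0 ⌊x⌋₊ := fun p hp => by
    obtain ⟨hps, hpx⟩ := mem_filter.mp hp
    exact mem_Ioc.mpr ⟨Nat.pos_of_ne_zero (ne_of_mem_of_not_mem hps hs), Nat.le_floor hpx.le⟩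
  calc (#(s.filter fun p : ℕ => (p : ℝ) < x) : ℝ) ≤ ⌊x⌋₊ := by
        exact_mod_cast (card_le_card hsub).trans (by simp)
    _ ≤ x := Nat.floor_le hx

lemma card_divisors_le_mul_rpow {t : ℝ} (ht : 1 ≤ t) {n : ℕ} (hn : n ≠ 0) :
    (#n.divisors : ℝ) ≤ (2 * t) ^ (2 : ℝ) ^ t * n ^ (1 / t) := by
  classical
  set S := n.primeFactors.filter fun p : ℕ => (p : ℝ) < 2 ^ t
  have hlocal : ∀ p ∈ n.primeFactors, (n.factorization p + 1 : ℝ) ≤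
      (if (p : ℝ) < 2 ^ t then 2 * t else 1) * (p : ℝ) ^ (n.factorization p * (1 / t)) := by
    intro p hp
    rw [← div_eq_mul_one_div]
    split_ifs with hsmall
    · have hp2 : (2 : ℝ) ≤ p := by exact_mod_cast (Nat.prime_of_mem_primeFactors hp).two_le
      exact succ_le_two_mul_mul_rpow ht hp2 _
    · rw [one_mul]
      exact succ_le_rpow_of_two_rpow_le (by linarith) (not_lt.mp hsmall) _
  have hS : (#S : ℝ) ≤ 2 ^ t :=
    card_filter_lt_le (fun h => by simp at h) (by positivity)
  rw [Nat.card_divisors hn, Nat.cast_rpow_eq_prod_primeFactors hn]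
  push_cast
  calc ∏ p ∈ n.primeFactors, (n.factorization p + 1 : ℝ)
      ≤ ∏ p ∈ n.primeFactors, ((if (p : ℝ) < 2 ^ t then 2 * t else 1) *
          (p : ℝ) ^ (n.factorization p * (1 / t))) :=
        prod_le_prod (fun _ _ => by positivity) hlocal
    _ = (2 * t) ^ #S * ∏ p ∈ n.primeFactors, (p : ℝ) ^ (n.factorization p * (1 / t)) := by
        rw [prod_mul_distrib, prod_ite, prod_const, prod_const, one_pow, mul_one]
    _ ≤ (2 * t) ^ (2 : ℝ) ^ t *
          ∏ p ∈ n.primeFactors, (p : ℝ) ^ (n.factorization p * (1 / t)) := by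
        rw [← rpow_natCast]
        exact mul_le_mul_of_nonneg_right (rpow_le_rpow_of_exponent_le (by linarith) hS)
          (by positivity)

lemma mul_rpow_two_rpow_le_exp {t : ℝ} (ht : 0 < t) :
    (2 * t) ^ (2 : ℝ) ^ t ≤ exp (4 * exp (2 * t) / t) := by
  have h2t : (2 : ℝ) ^ t ≤ exp t := by
    rw [rpow_def_of_pos two_pos]
    exact exp_le_exp.mpr (mul_le_of_le_one_left ht.le (log_two_lt_d9.le.trans (by norm_num)))
  have hsq : t ^ 2 ≤ 2 * exp t := by
    linarith [quadratic_le_exp_of_nonneg ht.le]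
  rw [rpow_def_of_pos (by positivity), exp_le_exp, le_div_iff₀ ht]
  calc log (2 * t) * 2 ^ t * t ≤ 2 * t * exp t * t := by
        gcongr
        linarith [log_le_sub_one_of_pos (by positivity : 0 < 2 * t)]
    _ = 2 * t ^ 2 * exp t := by ring
    _ ≤ 4 * exp (2 * t) := by
        rw [show 2 * t = t + t by ring, exp_add]
        nlinarith [exp_pos t]

/-- There exists a constant `C > 0` such that for every integer `n ≥ 3`,
`d(n) ≤ exp(C·log n / log log n)`. -/
theorem stmt8 :
    ∃ C : ℝ, 0 < C ∧
      ∀ n : ℕ, 3 ≤ n →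
        (dd n : ℝ) ≤ Real.exp (C * Real.log n / Real.log (Real.log n)) := by
  refine ⟨10, by norm_num, fun n hn => ?_⟩
  have hn0 : n ≠ 0 := by omega
  set L := log n
  have hL : 1 < L := by
    have hn3 : (3 : ℝ) ≤ n := by exact_mod_cast hn
    rw [← log_exp 1]
    exact log_lt_log (exp_pos 1) (by linarith [exp_one_lt_d9])
  have hlogL : 0 < log L := log_pos hL
  by_cases hsmall : log L ≤ 2
  · calc (dd n : ℝ) ≤ n := by exact_mod_cast Nat.card_divisors_le_self n
      _ = exp L := (exp_log (by positivity)).symm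
      _ ≤ exp (10 * L / log L) := by
        rw [exp_le_exp, le_div_iff₀ hlogL]
        nlinarith
  · set t := log L / 2 with ht_def
    have ht : 0 < t := by positivity
    have hexp : exp (2 * t) = L := by rw [mul_div_cancel₀ _ two_ne_zero, exp_log (by linarith)]
    calc (dd n : ℝ) ≤ (2 * t) ^ (2 : ℝ) ^ t * n ^ (1 / t) :=
          card_divisors_le_mul_rpow (by linarith) hn0
      _ ≤ exp (4 * exp (2 * t) / t) * exp (L / t) := by
          rw [rpow_def_of_pos (by positivity : (0 : ℝ) < n), mul_one_div]
          gcongr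
          exact mul_rpow_two_rpow_le_exp ht
      _ = exp (10 * L / log L) := by
          rw [← exp_add, hexp]
          congr 1
          field_simp
          ring
end

section
/- Let U ≥ 10⁴ be a positive integer, let L ≥ 100 be real, and set A = C₀·√(U·L) with C₀ ≥ 200. Let B = √U + (k+j)/(2√U) + η, where k + j is an integer and η ≥ 0 is real with √U·η ∈ ℤ, and assume |(k+j)/(2√U) + η| ≤ 1/L. Put ξ₁ = 1/(16√U) and ξ₂ = 3/(16√U). Then: (i) for every real θ with |θ| ≤ 5√L/A and every ξ ∈ [ξ₁, ξ₂], the fractional part satisfies 1/20 < {(B + θ + ξ)²} < 9/20; (ii) for every such θ there is no integer n with (B + θ + ξ₁)² < n ≤ (B + θ + ξ₂)²; and consequently (iii) S(B) := A·∫_{−5√L/A}^{5√L/A} e^{−πA²θ²} ( ∑_{n : ξ₁ < √n − B − θ ≤ ξ₂} d(n)·n^{−1/4} ) dθ = 0. -/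
open MeasureTheory
open scoped Real

set_option maxHeartbeats 1000000

/-- Section 1, (1.20)–(1.23): with `B = √U + (k+j)/(2√U) + η` (where `k+j ∈ ℤ`, `η ≥ 0`,
`√U·η ∈ ℤ`, `|(k+j)/(2√U) + η| ≤ 1/L`), `ξ₁ = 1/(16√U)`, `ξ₂ = 3/(16√U)`:
(i) `1/20 < {(B+θ+ξ)²} < 9/20` for `|θ| ≤ 5√L/A`, `ξ₁ ≤ ξ ≤ ξ₂`;
(ii) there is no integer in `((B+θ+ξ₁)², (B+θ+ξ₂)²]`; and (iii) `S(B) = 0`. -/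
theorem stmt17 (U : ℕ) (hU : 10 ^ 4 ≤ U) (L C₀ : ℝ) (hL : 100 ≤ L) (hC₀ : 200 ≤ C₀)
    (kj : ℤ) (η : ℝ) (hη : 0 ≤ η) (hηint : ∃ z : ℤ, Real.sqrt U * η = (z : ℝ))
    (hsize : |(kj : ℝ) / (2 * Real.sqrt U) + η| ≤ 1 / L) :
    let A : ℝ := C₀ * Real.sqrt ((U : ℝ) * L)
    let B : ℝ := Real.sqrt U + (kj : ℝ) / (2 * Real.sqrt U) + η
    let ξ₁ : ℝ := 1 / (16 * Real.sqrt U)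
    let ξ₂ : ℝ := 3 / (16 * Real.sqrt U)
    (∀ θ ξ : ℝ, |θ| ≤ 5 * Real.sqrt L / A → ξ₁ ≤ ξ → ξ ≤ ξ₂ →
        1 / 20 < Int.fract ((B + θ + ξ) ^ 2) ∧ Int.fract ((B + θ + ξ) ^ 2) < 9 / 20) ∧
    (∀ θ : ℝ, |θ| ≤ 5 * Real.sqrt L / A →
        ∀ n : ℤ, ¬((B + θ + ξ₁) ^ 2 < (n : ℝ) ∧ (n : ℝ) ≤ (B + θ + ξ₂) ^ 2)) ∧
    A * ∫ θ in (-(5 * Real.sqrt L / A))..(5 * Real.sqrt L / A),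
        Real.exp (-π * A ^ 2 * θ ^ 2) *
          ∑ n ∈ Finset.Ioc ⌊(B + θ + ξ₁) ^ 2⌋₊ ⌊(B + θ + ξ₂) ^ 2⌋₊,
            (dd n : ℝ) * (n : ℝ) ^ (-(1 / 4 : ℝ)) = 0 := by
  intro A B ξ₁ ξ₂
  obtain ⟨z, hz⟩ := hηint
  have hAdef : A = C₀ * Real.sqrt ((U:ℝ)*L) := rfl
  have hBdef : B = Real.sqrt U + (kj:ℝ)/(2*Real.sqrt U) + η := rfl
  have hξ₁def : ξ₁ = 1/(16*Real.sqrt U) := rfl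
  have hξ₂def : ξ₂ = 3/(16*Real.sqrt U) := rfl
  clear_value A B ξ₁ ξ₂
  have hU' : (10000:ℝ) ≤ (U:ℝ) := by exact_mod_cast hU
  have hs : (100:ℝ) ≤ Real.sqrt U := by
    have h := Real.sqrt_le_sqrt (show (10000:ℝ) ≤ (U:ℝ) from hU')
    rwa [show (10000:ℝ) = 100^2 by norm_num, Real.sqrt_sq (by norm_num)] at h
  have hL0 : (0:ℝ) < L := by linarith
  have hsqL : (10:ℝ) ≤ Real.sqrt L := by
    have h := Real.sqrt_le_sqrt (show (100:ℝ) ≤ L from hL)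
    rwa [show (100:ℝ) = 10^2 by norm_num, Real.sqrt_sq (by norm_num)] at h
  have hsqL0 : (0:ℝ) < Real.sqrt L := by linarith
  set s := Real.sqrt (U:ℝ) with hsdef
  have hs2 : s^2 = (U:ℝ) := by rw [hsdef]; exact Real.sq_sqrt (by positivity)
  have hAeq : A = C₀ * (s * Real.sqrt L) := by
    rw [hAdef, Real.sqrt_mul (by positivity : (0:ℝ) ≤ (U:ℝ)), ← hsdef]
  clear_value s
  clear hAdef hsdef
  have hs0 : (0:ℝ) < s := by linarith
  have hsne : s ≠ 0 := ne_of_gt hs0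
  set δ : ℝ := (kj:ℝ)/(2*s) + η with hδdef
  have hδb : |δ| ≤ 1/100 := by
    refine hsize.trans ?_
    rw [div_le_div_iff₀ hL0 (by norm_num)]
    linarith
  obtain ⟨hδl, hδu⟩ := abs_le.mp hδb
  have hδ2 : δ^2 ≤ 1/10000 := by nlinarith
  set N : ℤ := (U:ℤ) + kj + 2*z with hNdef
  have hNcast : (N:ℝ) = (U:ℝ) + (kj:ℝ) + 2*(s*η) := by
    rw [hz]; push_cast [hNdef]; ring
  have hBsd : B = s + δ := by rw [hBdef, hδdef]; ring
  clear_value N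
  have hd : 2*s*δ = (kj:ℝ) + 2*(s*η) := by rw [hδdef]; field_simp
  clear_value δ
  have hw : (1:ℝ)/s ≤ 1/100 := by
    rw [div_le_div_iff₀ hs0 (by norm_num)]; linarith
  have hkey : ∀ t : ℝ, 3/(80*s) ≤ t → t ≤ 17/(80*s) →
      ∃ r : ℝ, (B + t)^2 = (N:ℝ) + r ∧ 1/20 < r ∧ r < 9/20 := by
    intro t ht1 ht2
    have ht0 : 0 < t := lt_of_lt_of_le (div_pos (by norm_num) (by linarith)) ht1
    refine ⟨δ^2 + 2*(s+δ)*t + t^2, ?_, ?_, ?_⟩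
    · rw [hBsd, hNcast]
      linear_combination hs2 + hd
    · have hm1 : (s - 1/100) * (3/(80*s)) ≤ (s+δ)*t :=
        mul_le_mul (by linarith) ht1 (div_nonneg (by norm_num) (by linarith)) (by linarith)
      have he1 : (s - 1/100) * (3/(80*s)) = 3/80 - 3/8000 * (1/s) := by
        field_simp
        ring
      nlinarith [sq_nonneg δ, sq_nonneg t]
    · have hm2 : (s+δ)*t ≤ (s + 1/100) * (17/(80*s)) :=
        mul_le_mul (by linarith) ht2 (le_of_lt ht0) (by linarith)
      have he2 : (s + 1/100) * (17/(80*s)) = 17/80 + 17/8000 * (1/s) := by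
        field_simp
        ring
      have ht17 : t ≤ 17/8000 := by
        refine ht2.trans ?_
        rw [div_le_div_iff₀ (by linarith) (by norm_num)]
        nlinarith
      nlinarith
  have hA0 : 0 < A := by
    rw [hAeq]; exact mul_pos (by linarith) (mul_pos hs0 hsqL0)
  have hθb : 5 * Real.sqrt L / A ≤ 1/(40*s) := by
    rw [hAeq, div_le_div_iff₀ (mul_pos (by linarith) (mul_pos hs0 hsqL0)) (by linarith)]
    nlinarith [mul_nonneg (show (0:ℝ) ≤ C₀ - 200 by linarith) (le_of_lt (mul_pos hs0 hsqL0))]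
  have hξle : ξ₁ ≤ ξ₂ := by
    rw [hξ₁def, hξ₂def, div_le_div_iff₀ (by linarith) (by linarith)]
    nlinarith
  have hrange : ∀ θ ξ : ℝ, |θ| ≤ 5*Real.sqrt L / A → ξ₁ ≤ ξ → ξ ≤ ξ₂ →
      3/(80*s) ≤ θ + ξ ∧ θ + ξ ≤ 17/(80*s) := by
    intro θ ξ hθ h1 h2
    obtain ⟨hθl, hθu⟩ := abs_le.mp (hθ.trans hθb)
    rw [hξ₁def] at h1
    rw [hξ₂def] at h2
    constructor
    · have e : (3:ℝ)/(80*s) = 1/(16*s) - 1/(40*s) := by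
        field_simp
        ring
      linarith
    · have e : (17:ℝ)/(80*s) = 3/(16*s) + 1/(40*s) := by
        field_simp
        ring
      linarith
  refine ⟨?_, ?_, ?_⟩
  · intro θ ξ hθ h1 h2
    obtain ⟨ht1, ht2⟩ := hrange θ ξ hθ h1 h2
    obtain ⟨r, heq, hlo, hhi⟩ := hkey (θ + ξ) ht1 ht2
    rw [show B + θ + ξ = B + (θ + ξ) by ring, heq, Int.fract_intCast_add,
        Int.fract_eq_self.mpr ⟨by linarith, by linarith⟩]
    exact ⟨hlo, hhi⟩
  · intro θ hθ n hn
    obtain ⟨h1, h2⟩ := hn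
    obtain ⟨ht11, ht12⟩ := hrange θ ξ₁ hθ le_rfl hξle
    obtain ⟨ht21, ht22⟩ := hrange θ ξ₂ hθ hξle le_rfl
    obtain ⟨r₁, heq1, hlo1, hhi1⟩ := hkey (θ + ξ₁) ht11 ht12
    obtain ⟨r₂, heq2, hlo2, hhi2⟩ := hkey (θ + ξ₂) ht21 ht22
    rw [show B + θ + ξ₁ = B + (θ + ξ₁) by ring, heq1] at h1
    rw [show B + θ + ξ₂ = B + (θ + ξ₂) by ring, heq2] at h2
    have hNn : N < n := by exact_mod_cast (show (N:ℝ) < n by linarith)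
    have hNn' : (N:ℝ) + 1 ≤ n := by exact_mod_cast Int.lt_iff_add_one_le.mp hNn
    linarith
  · have hc0 : 0 ≤ 5 * Real.sqrt L / A := div_nonneg (by positivity) hA0.le
    have hzero : Set.EqOn
        (fun θ => Real.exp (-π * A ^ 2 * θ ^ 2) *
          ∑ n ∈ Finset.Ioc ⌊(B + θ + ξ₁) ^ 2⌋₊ ⌊(B + θ + ξ₂) ^ 2⌋₊,
            (dd n : ℝ) * (n : ℝ) ^ (-(1 / 4 : ℝ)))
        (fun _ => (0:ℝ))
        (Set.uIcc (-(5 * Real.sqrt L / A)) (5 * Real.sqrt L / A)) := by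
      intro θ hθmem
      rw [Set.uIcc_of_le (by linarith)] at hθmem
      have hθ : |θ| ≤ 5 * Real.sqrt L / A := abs_le.mpr ⟨hθmem.1, hθmem.2⟩
      obtain ⟨ht11, ht12⟩ := hrange θ ξ₁ hθ le_rfl hξle
      obtain ⟨ht21, ht22⟩ := hrange θ ξ₂ hθ hξle le_rfl
      obtain ⟨r₁, heq1, hlo1, hhi1⟩ := hkey (θ + ξ₁) ht11 ht12
      obtain ⟨r₂, heq2, hlo2, hhi2⟩ := hkey (θ + ξ₂) ht21 ht22
      have hx1 : (B + θ + ξ₁)^2 = (N:ℝ) + r₁ := by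
        rw [show B + θ + ξ₁ = B + (θ + ξ₁) by ring]; exact heq1
      have hx2 : (B + θ + ξ₂)^2 = (N:ℝ) + r₂ := by
        rw [show B + θ + ξ₂ = B + (θ + ξ₂) by ring]; exact heq2
      have hN0 : 0 ≤ N := by
        by_contra hneg
        push_neg at hneg
        have h1 : (N:ℝ) + 1 ≤ 0 := by exact_mod_cast Int.lt_iff_add_one_le.mp hneg
        have h2 : (0:ℝ) ≤ (B + θ + ξ₁)^2 := sq_nonneg _
        rw [hx1] at h2
        linarith
      have hN0' : (0:ℝ) ≤ (N:ℝ) := by exact_mod_cast hN0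
      have hNr : ((N.toNat : ℕ) : ℝ) = (N:ℝ) := by exact_mod_cast Int.toNat_of_nonneg hN0
      have hf1 : ⌊(B + θ + ξ₁)^2⌋₊ = N.toNat := by
        rw [hx1, Nat.floor_eq_iff (by linarith)]
        rw [hNr]
        constructor <;> linarith
      have hf2 : ⌊(B + θ + ξ₂)^2⌋₊ = N.toNat := by
        rw [hx2, Nat.floor_eq_iff (by linarith)]
        rw [hNr]
        constructor <;> linarith
      simp only [hf1, hf2, Finset.Ioc_self, Finset.sum_empty, mul_zero]
    rw [intervalIntegral.integral_congr hzero, intervalIntegral.integral_zero, mul_zero]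
end
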